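/- Let Λ = diag(λ₁,…,λₙ) with distinct entries and z ∈ ℝⁿ with all entries nonzero, ρ ≠ 0. Then no λᵢ is an eigenvalue of Λ + ρzzᵀ; i.e., Λ + ρzzᵀ − λᵢI is invertible for every i. -/
import Mathlib


open Matrix

lemma key_ker {n : ℕ} (l : Fin n → ℝ) (z : Fin n → ℝ)
    (ρ : ℝ) (hl : Function.Injective l) (hz : ∀ i, z i ≠ 0) (hρ : ρ ≠ 0)
    (i : Fin n) (v : Fin n → ℝ)
    (h : (Matrix.diagonal l + ρ • Matrix.vecMulVec z z) *ᵥ v = l i • v) : v = 0 := by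
  have hj : ∀ j, l j * v j + ρ * (z j * (∑ k, z k * v k)) = l i * v j := by
    intro j
    have := congrFun h j
    simp [Matrix.mulVec, Matrix.vecMulVec_apply, dotProduct, Matrix.diagonal,
      add_mul, Finset.sum_add_distrib, Finset.mul_sum, ite_mul, Finset.sum_ite_eq,
      mul_assoc] at this
    simpa [Finset.mul_sum] using this
  have hdot : (∑ k, z k * v k) = 0 := by
    have := hj i
    have h0 : ρ * (z i * (∑ k, z k * v k)) = 0 := by linarith
    rcases mul_eq_zero.1 h0 with h | h
    · exact absurd h hρ
    rcases mul_eq_zero.1 h with h | h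
    · exact absurd h (hz i)
    · exact h
  have hvj : ∀ j, j ≠ i → v j = 0 := by
    intro j hji
    have := hj j
    rw [hdot] at this
    have h1 : (l j - l i) * v j = 0 := by ring_nf; linarith
    rcases mul_eq_zero.1 h1 with h | h
    · exact absurd (hl (by linarith : l j = l i)) hji
    · exact h
  have hvi : v i = 0 := by
    have : (∑ k, z k * v k) = z i * v i := by
      apply Finset.sum_eq_single
      · intro k _ hk
        rw [hvj k hk, mul_zero]
      · intro hmem; exact absurd (Finset.mem_univ i) hmem
    rw [this] at hdot
    rcases mul_eq_zero.1 hdot with h | h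
    · exact absurd h (hz i)
    · exact h
  funext j
  by_cases hji : j = i
  · rw [hji]; exact hvi
  · exact hvj j hji

theorem diagonal_entries_not_eigenvalues {n : ℕ} (l : Fin n → ℝ) (z : Fin n → ℝ)
    (ρ : ℝ) (hl : Function.Injective l) (hz : ∀ i, z i ≠ 0) (hρ : ρ ≠ 0) :
    (∀ (i : Fin n) (v : Fin n → ℝ),
        (Matrix.diagonal l + ρ • Matrix.vecMulVec z z) *ᵥ v = l i • v → v = 0) ∧
      ∀ i : Fin n,
        IsUnit (Matrix.diagonal l + ρ • Matrix.vecMulVec z z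
          - l i • (1 : Matrix (Fin n) (Fin n) ℝ)) := by
  refine ⟨key_ker l z ρ hl hz hρ, fun i => ?_⟩
  set A := Matrix.diagonal l + ρ • Matrix.vecMulVec z z with hA
  rw [Matrix.isUnit_iff_isUnit_det, isUnit_iff_ne_zero]
  intro hdet
  rw [← Matrix.exists_mulVec_eq_zero_iff] at hdet
  obtain ⟨v, hv0, hv⟩ := hdet
  apply hv0
  apply key_ker l z ρ hl hz hρ i v
  have : (A - l i • 1) *ᵥ v = A *ᵥ v - l i • v := by
    rw [Matrix.sub_mulVec, Matrix.smul_mulVec, Matrix.one_mulVec]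
  rw [this] at hv
  linear_combination (norm := module) hv
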